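/- arXiv:2504.00826 — 2 statements merged into one kernel-verified Lean document; each statement's English description precedes it below -/
import Mathlib

section
/- Let X be a real Banach space of dimension at least 2. Then for every t ∈ [0, 1/2), L_X(t) ≥ (4t² − 4t + 1)·C'_NJ(X). -/
/-!
For unit vectors `u, v` the pair `x = u + v`, `y = u - v` is isosceles orthogonal with
`‖x + y‖ = 2`, and `t • x + (1 - t) • y = u - s • v`, `(1 - t) • x + t • y = u + s • v` with
`s = 1 - 2t`. So it suffices that `s² (‖u + v‖² + ‖u - v‖²) ≤ ‖u - s • v‖² + ‖u + s • v‖²`.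
This follows from the triangle inequality: `‖u - s • v‖` is at least both `‖u - v‖ - (1 - s)`
and `1 - s`, similarly for `‖u + s • v‖`, and `‖u + v‖ + ‖u - v‖ ≥ 2`.
-/

/-- The geometric constant `L_X(t)` defined via isosceles orthogonality. -/
noncomputable def LX (X : Type*) [NormedAddCommGroup X] [NormedSpace ℝ X] (t : ℝ) : ℝ :=
  sSup {r : ℝ | ∃ x y : X, (x, y) ≠ (0, 0) ∧ ‖x + y‖ = ‖x - y‖ ∧
    r = (‖t • x + (1 - t) • y‖ ^ 2 + ‖(1 - t) • x + t • y‖ ^ 2) / ‖x + y‖ ^ 2}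

/-- The modified von Neumann–Jordan constant. -/
noncomputable def CNJ' (X : Type*) [NormedAddCommGroup X] [NormedSpace ℝ X] : ℝ :=
  sSup {r : ℝ | ∃ x y : X, ‖x‖ = 1 ∧ ‖y‖ = 1 ∧
    r = (‖x + y‖ ^ 2 + ‖x - y‖ ^ 2) / 4}

lemma sq_mul_sq_add_sq_le_sq_add_sq {s a b P Q : ℝ} (hs₀ : 0 ≤ s) (hs₁ : s ≤ 1)
    (ha : 0 ≤ a) (hb : 0 ≤ b) (hab : 2 ≤ a + b)
    (hPb : b - (1 - s) ≤ P) (hPs : 1 - s ≤ P) (hQa : a - (1 - s) ≤ Q) (hQs : 1 - s ≤ Q) :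
    s ^ 2 * (a ^ 2 + b ^ 2) ≤ P ^ 2 + Q ^ 2 := by
  have hP : (b - (1 - s)) ^ 2 ≤ P ^ 2 := sq_le_sq' (by linarith) hPb
  have hQ : (a - (1 - s)) ^ 2 ≤ Q ^ 2 := sq_le_sq' (by linarith) hQa
  have hsum : 2 * (a + b) ≤ 2 * (a ^ 2 + b ^ 2) := by
    nlinarith [sq_nonneg (a - b), sq_nonneg (a + b - 2)]
  nlinarith [mul_nonneg (mul_nonneg hs₀ (sub_nonneg.2 hs₁)) (sub_nonneg.2 hsum),
    mul_nonneg (mul_nonneg (sub_nonneg.2 hs₁) (sub_nonneg.2 hs₁))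
      (add_nonneg (sq_nonneg (a - 1)) (sq_nonneg (b - 1)))]

section NormedSpace

variable {E : Type*} [SeminormedAddCommGroup E] [NormedSpace ℝ E]

lemma sq_mul_norm_add_sq_add_norm_sub_sq_le {u v : E} (hu : ‖u‖ = 1) (hv : ‖v‖ = 1) {s : ℝ}
    (hs₀ : 0 ≤ s) (hs₁ : s ≤ 1) :
    s ^ 2 * (‖u + v‖ ^ 2 + ‖u - v‖ ^ 2) ≤ ‖u - s • v‖ ^ 2 + ‖u + s • v‖ ^ 2 := by
  have hsv : ‖s • v‖ = s := by rw [norm_smul, hv, Real.norm_of_nonneg hs₀, mul_one]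
  have hcv : ‖(1 - s) • v‖ = 1 - s := by
    rw [norm_smul, hv, Real.norm_of_nonneg (sub_nonneg.2 hs₁), mul_one]
  have hab : ‖u + u‖ ≤ ‖u + v‖ + ‖u - v‖ := by
    simpa using norm_add_le (u + v) (u - v)
  have hPb := norm_sub_le (u - s • v) ((1 - s) • v)
  have hPs := norm_add_le (u - s • v) (s • v)
  have hQa := norm_add_le (u + s • v) ((1 - s) • v)
  have hQs := norm_sub_le (u + s • v) (s • v)
  rw [← two_smul ℝ u, norm_smul, hu, Real.norm_two, mul_one] at hab
  rw [show u - s • v - (1 - s) • v = u - v by module] at hPb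
  rw [show u + s • v + (1 - s) • v = u + v by module] at hQa
  simp only [sub_add_cancel, add_sub_cancel_right, hu] at hPs hQs
  exact sq_mul_sq_add_sq_le_sq_add_sq hs₀ hs₁ (norm_nonneg _) (norm_nonneg _) hab
    (by linarith) (by linarith) (by linarith) (by linarith)

lemma norm_left_le_of_norm_add_eq_norm_sub {x y : E} (h : ‖x + y‖ = ‖x - y‖) :
    ‖x‖ ≤ ‖x + y‖ := by
  have := norm_add_le (x + y) (x - y)
  rw [show x + y + (x - y) = (2 : ℝ) • x by module, norm_smul, Real.norm_two, ← h] at this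
  linarith

lemma norm_right_le_of_norm_add_eq_norm_sub {x y : E} (h : ‖x + y‖ = ‖x - y‖) :
    ‖y‖ ≤ ‖x + y‖ := by
  have := norm_sub_le (x + y) (x - y)
  rw [show x + y - (x - y) = (2 : ℝ) • y by module, norm_smul, Real.norm_two, ← h] at this
  linarith

lemma norm_smul_add_smul_le_of_norm_add_eq_norm_sub {x y : E} (h : ‖x + y‖ = ‖x - y‖)
    (a b : ℝ) : ‖a • x + b • y‖ ≤ (|a| + |b|) * ‖x + y‖ :=
  calc ‖a • x + b • y‖ ≤ |a| * ‖x‖ + |b| * ‖y‖ := by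
        simpa only [norm_smul, Real.norm_eq_abs] using norm_add_le (a • x) (b • y)
    _ ≤ (|a| + |b|) * ‖x + y‖ := by
        rw [add_mul]
        gcongr
        exacts [norm_left_le_of_norm_add_eq_norm_sub h, norm_right_le_of_norm_add_eq_norm_sub h]

end NormedSpace

section LX

variable {X : Type*} [NormedAddCommGroup X] [NormedSpace ℝ X]

lemma bddAbove_LX_set (t : ℝ) :
    BddAbove {r : ℝ | ∃ x y : X, (x, y) ≠ (0, 0) ∧ ‖x + y‖ = ‖x - y‖ ∧
      r = (‖t • x + (1 - t) • y‖ ^ 2 + ‖(1 - t) • x + t • y‖ ^ 2) / ‖x + y‖ ^ 2} := by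
  refine ⟨2 * (|t| + |1 - t|) ^ 2, ?_⟩
  rintro _ ⟨x, y, -, h, rfl⟩
  have h₁ := norm_smul_add_smul_le_of_norm_add_eq_norm_sub h t (1 - t)
  have h₂ := norm_smul_add_smul_le_of_norm_add_eq_norm_sub h (1 - t) t
  refine div_le_of_le_mul₀ (by positivity) (by positivity) ?_
  nlinarith [pow_le_pow_left₀ (norm_nonneg _) h₁ 2, pow_le_pow_left₀ (norm_nonneg _) h₂ 2]

lemma LX_nonneg (t : ℝ) : 0 ≤ LX X t :=
  Real.sSup_nonneg <| by rintro _ ⟨x, y, -, -, rfl⟩; positivity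

lemma le_LX {x y : X} (hxy : (x, y) ≠ (0, 0)) (h : ‖x + y‖ = ‖x - y‖) (t : ℝ) :
    (‖t • x + (1 - t) • y‖ ^ 2 + ‖(1 - t) • x + t • y‖ ^ 2) / ‖x + y‖ ^ 2 ≤ LX X t :=
  le_csSup (bddAbove_LX_set t) ⟨x, y, hxy, h, rfl⟩

lemma norm_sub_sq_add_norm_add_sq_div_four_le_LX {u v : X} (hu : ‖u‖ = 1) (hv : ‖v‖ = 1)
    (t : ℝ) :
    (‖u - (1 - 2 * t) • v‖ ^ 2 + ‖u + (1 - 2 * t) • v‖ ^ 2) / 4 ≤ LX X t := by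
  have hsum : ‖(u + v) + (u - v)‖ = 2 := by
    rw [show (u + v) + (u - v) = (2 : ℝ) • u by module, norm_smul, hu, Real.norm_two, mul_one]
  have hdiff : ‖(u + v) - (u - v)‖ = 2 := by
    rw [show (u + v) - (u - v) = (2 : ℝ) • v by module, norm_smul, hv, Real.norm_two, mul_one]
  have hne : (u + v, u - v) ≠ (0, 0) := by
    intro h
    simp only [Prod.mk.injEq] at h
    rw [h.1, h.2, add_zero, norm_zero] at hsum
    norm_num at hsum
  have := le_LX hne (hsum.trans hdiff.symm) t
  rwa [hsum, show t • (u + v) + (1 - t) • (u - v) = u - (1 - 2 * t) • v by module,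
    show (1 - t) • (u + v) + t • (u - v) = u + (1 - 2 * t) • v by module,
    show (2 : ℝ) ^ 2 = 4 by norm_num] at this

end LX

theorem stmt_10_general (X : Type*) [NormedAddCommGroup X] [NormedSpace ℝ X]
    (t : ℝ) (ht : t ∈ Set.Ico (0 : ℝ) (1 / 2)) :
    (4 * t ^ 2 - 4 * t + 1) * CNJ' X ≤ LX X t := by
  obtain ⟨ht₀, ht₁⟩ := ht
  have hk : 0 < (1 - 2 * t) ^ 2 := by nlinarith
  rw [show 4 * t ^ 2 - 4 * t + 1 = (1 - 2 * t) ^ 2 by ring, ← le_div_iff₀' hk]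
  -- `Real.sSup_le` needs no nonemptiness: on the trivial space both suprema are `sSup ∅ = 0`.
  refine Real.sSup_le ?_ (div_nonneg (LX_nonneg t) hk.le)
  rintro _ ⟨u, v, hu, hv, rfl⟩
  rw [le_div_iff₀' hk]
  calc (1 - 2 * t) ^ 2 * ((‖u + v‖ ^ 2 + ‖u - v‖ ^ 2) / 4)
      ≤ (‖u - (1 - 2 * t) • v‖ ^ 2 + ‖u + (1 - 2 * t) • v‖ ^ 2) / 4 := by
        rw [← mul_div_assoc]
        gcongr
        exact sq_mul_norm_add_sq_add_norm_sub_sq_le hu hv (by linarith) (by linarith)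
    _ ≤ LX X t := norm_sub_sq_add_norm_add_sq_div_four_le_LX hu hv t

theorem stmt_10 (X : Type*) [NormedAddCommGroup X] [NormedSpace ℝ X] [CompleteSpace X]
    (hdim : 2 ≤ Module.rank ℝ X) (t : ℝ) (ht : t ∈ Set.Ico (0 : ℝ) (1 / 2)) :
    (4 * t ^ 2 - 4 * t + 1) * CNJ' X ≤ LX X t :=
  stmt_10_general X t ht
end

section
/- Let X be a real Banach space of dimension at least 2 that is not uniformly non-square, i.e. for every ε > 0 there exist x, y ∈ X with ‖x‖ = ‖y‖ = 1, ‖x + y‖ > 2 − ε and ‖x − y‖ > 2 − ε. Then L_X(t) = 2t² − 4t + 2 for every t ∈ [0, 1/2). -/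
open Filter Topology Set

section Seminormed

variable {X : Type*} [SeminormedAddCommGroup X] [NormedSpace ℝ X]

noncomputable def lxQuotient (t : ℝ) (x y : X) : ℝ :=
  (‖t • x + (1 - t) • y‖ ^ 2 + ‖(1 - t) • x + t • y‖ ^ 2) / ‖x + y‖ ^ 2

theorem norm_smul_add_one_sub_smul_le {x y : X} (hxy : ‖x + y‖ = ‖x - y‖) {t : ℝ}
    (ht : t ≤ 1 / 2) : ‖t • x + (1 - t) • y‖ ≤ (1 - t) * ‖x + y‖ :=
  calc ‖t • x + (1 - t) • y‖ = ‖(1 / 2 : ℝ) • (x + y) - ((1 - 2 * t) / 2) • (x - y)‖ := by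
        congr 1; module
    _ ≤ ‖(1 / 2 : ℝ) • (x + y)‖ + ‖((1 - 2 * t) / 2) • (x - y)‖ := norm_sub_le _ _
    _ = 1 / 2 * ‖x + y‖ + (1 - 2 * t) / 2 * ‖x - y‖ := by
        rw [norm_smul, norm_smul, Real.norm_of_nonneg (by norm_num),
          Real.norm_of_nonneg (by linarith)]
    _ = (1 - t) * ‖x + y‖ := by rw [← hxy]; ring

theorem lxQuotient_le {x y : X} (hxy : ‖x + y‖ = ‖x - y‖) {t : ℝ}
    (ht : t ≤ 1 / 2) : lxQuotient t x y ≤ 2 * (1 - t) ^ 2 := by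
  have hyx : ‖y + x‖ = ‖y - x‖ := by rw [add_comm, hxy, norm_sub_rev]
  have h₁ := norm_smul_add_one_sub_smul_le hxy ht
  have h₂ : ‖(1 - t) • x + t • y‖ ≤ (1 - t) * ‖x + y‖ := by
    simpa only [add_comm] using norm_smul_add_one_sub_smul_le hyx ht
  apply div_le_of_le_mul₀ (by positivity) (by positivity)
  have h₁' := pow_le_pow_left₀ (norm_nonneg _) h₁ 2
  have h₂' := pow_le_pow_left₀ (norm_nonneg _) h₂ 2
  nlinarith

theorem norm_add_add_sub_eq_norm_add_sub_sub {u v : X} (h : ‖u‖ = ‖v‖) :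
    ‖(u + v) + (u - v)‖ = ‖(u + v) - (u - v)‖ := by
  rw [show (u + v) + (u - v) = (2 : ℝ) • u by module,
    show (u + v) - (u - v) = (2 : ℝ) • v by module, norm_smul, norm_smul, h]

theorem add_sub_pair_ne_zero {u v : X} (hu : u ≠ 0) : (u + v, u - v) ≠ (0, 0) := by
  intro h
  obtain ⟨hadd, hsub⟩ := Prod.mk.inj h
  refine hu ?_
  rw [show u = (2⁻¹ : ℝ) • ((u + v) + (u - v)) by module, hadd, hsub, add_zero, smul_zero]

theorem sq_sub_div_two_le_lxQuotient_add_sub {u v : X} (hu : ‖u‖ = 1) (hv : ‖v‖ = 1)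
    {t a : ℝ} (ht₀ : 0 ≤ t) (hta : 2 * t ≤ a) (hau : a ≤ ‖u + v‖) (hav : a ≤ ‖u - v‖) :
    (a - 2 * t) ^ 2 / 2 ≤ lxQuotient t (u + v) (u - v) := by
  have h2tv : ‖(2 * t) • v‖ = 2 * t := by
    rw [norm_smul, hv, Real.norm_of_nonneg (by linarith), mul_one]
  have h₁ : a - 2 * t ≤ ‖t • (u + v) + (1 - t) • (u - v)‖ := by
    rw [show t • (u + v) + (1 - t) • (u - v) = (u - v) + (2 * t) • v by module]
    linarith [norm_sub_le_norm_add (u - v) ((2 * t) • v)]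
  have h₂ : a - 2 * t ≤ ‖(1 - t) • (u + v) + t • (u - v)‖ := by
    rw [show (1 - t) • (u + v) + t • (u - v) = (u + v) - (2 * t) • v by module]
    linarith [norm_sub_norm_le (u + v) ((2 * t) • v)]
  have hden : ‖(u + v) + (u - v)‖ = 2 := by
    rw [show (u + v) + (u - v) = (2 : ℝ) • u by module, norm_smul, hu]; norm_num
  have h₁' := pow_le_pow_left₀ (by linarith) h₁ 2
  have h₂' := pow_le_pow_left₀ (by linarith) h₂ 2
  rw [lxQuotient, hden, le_div_iff₀ (by norm_num)]
  linarith

theorem exists_lt_lxQuotient_add_sub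
    (hns : ∀ ε > (0 : ℝ), ∃ x y : X, ‖x‖ = 1 ∧ ‖y‖ = 1 ∧ 2 - ε < ‖x + y‖ ∧ 2 - ε < ‖x - y‖)
    {t w : ℝ} (ht₀ : 0 ≤ t) (ht : t < 1) (hw : w < 2 * (1 - t) ^ 2) :
    ∃ u v : X, ‖u‖ = 1 ∧ ‖v‖ = 1 ∧ w < lxQuotient t (u + v) (u - v) := by
  have hlim : Tendsto (fun a : ℝ ↦ (a - 2 * t) ^ 2 / 2) (𝓝[<] 2) (𝓝 (2 * (1 - t) ^ 2)) := by
    have hcont : Continuous fun a : ℝ ↦ (a - 2 * t) ^ 2 / 2 := by fun_prop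
    convert (hcont.tendsto 2).mono_left nhdsWithin_le_nhds using 2
    ring
  have hta : ∀ᶠ a in 𝓝[<] (2 : ℝ), 2 * t < a :=
    mem_nhdsWithin_of_mem_nhds (lt_mem_nhds (by linarith))
  obtain ⟨a, hwa, hta, ha⟩ :=
    ((hlim.eventually (lt_mem_nhds hw)).and (hta.and self_mem_nhdsWithin)).exists
  obtain ⟨u, v, hu, hv, hau, hav⟩ := hns (2 - a) (sub_pos.2 ha)
  rw [sub_sub_cancel] at hau hav
  exact ⟨u, v, hu, hv,
    hwa.trans_le (sq_sub_div_two_le_lxQuotient_add_sub hu hv ht₀ hta.le hau.le hav.le)⟩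

end Seminormed

theorem stmt_14_general (X : Type*) [NormedAddCommGroup X] [NormedSpace ℝ X]
    (hns : ∀ ε > (0 : ℝ), ∃ x y : X, ‖x‖ = 1 ∧ ‖y‖ = 1 ∧
      2 - ε < ‖x + y‖ ∧ 2 - ε < ‖x - y‖) :
    ∀ t ∈ Set.Ico (0 : ℝ) (1 / 2), LX X t = 2 * t ^ 2 - 4 * t + 2 := by
  rintro t ⟨ht₀, ht⟩
  rw [show 2 * t ^ 2 - 4 * t + 2 = 2 * (1 - t) ^ 2 by ring]
  have happrox : ∀ w < 2 * (1 - t) ^ 2, ∃ r ∈ {r : ℝ | ∃ x y : X, (x, y) ≠ (0, 0) ∧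
      ‖x + y‖ = ‖x - y‖ ∧ r = lxQuotient t x y}, w < r := by
    intro w hw
    obtain ⟨u, v, hu, hv, hwr⟩ := exists_lt_lxQuotient_add_sub hns ht₀ (by linarith) hw
    have hu₀ : u ≠ 0 := norm_ne_zero_iff.1 (hu ▸ one_ne_zero)
    exact ⟨_, ⟨u + v, u - v, add_sub_pair_ne_zero hu₀,
      norm_add_add_sub_eq_norm_add_sub_sub (hu.trans hv.symm), rfl⟩, hwr⟩
  exact csSup_eq_of_forall_le_of_forall_lt_exists_gt
    (let ⟨r, hr, _⟩ := happrox _ (sub_one_lt _); ⟨r, hr⟩)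
    (by rintro _ ⟨x, y, -, hxy, rfl⟩; exact lxQuotient_le hxy ht.le) happrox

theorem stmt_14 (X : Type*) [NormedAddCommGroup X] [NormedSpace ℝ X] [CompleteSpace X]
    (hdim : 2 ≤ Module.rank ℝ X)
    (hns : ∀ ε > (0 : ℝ), ∃ x y : X, ‖x‖ = 1 ∧ ‖y‖ = 1 ∧
      2 - ε < ‖x + y‖ ∧ 2 - ε < ‖x - y‖) :
    ∀ t ∈ Set.Ico (0 : ℝ) (1 / 2), LX X t = 2 * t ^ 2 - 4 * t + 2 :=
  stmt_14_general X hns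
end
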